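/- Let ρ : I → ℝ be a differentiable positive function on an interval I, and let ψ, ψ_h : I → ℝ with sin ψ ≠ 0, sin ψ_h ≠ 0, such that ρ'(θ) = ρ(θ)·(cot ψ_h(θ) - cot ψ(θ)) and ψ(θ) = ψ_h(θ) - φ(θ). Suppose 0 < ρ ≤ 1, |tan φ(θ)| ≤ ε with ε·Q < 1, and |cot ψ(θ)| ≤ Q. Then |ρ'(θ)| ≤ ε·(1 + Q²)·√(1 + ε²)/(1 - ε·Q). -/

import Mathlib

open Real

/-! The identity `cot (ψ + φ) - cot ψ = -tan φ (1 + cot² ψ) / (1 + cot ψ tan φ)` turns the hypothesis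
on `ρ'` into `|ρ'| = ρ |tan φ| (1 + cot² ψ) / |1 + cot ψ tan φ|`; the numerator is at most `ε (1 + Q²)`
and the denominator at least `1 - ε Q`. -/

namespace Real

theorem cot_sub_cot {x y : ℝ} (hx : sin x ≠ 0) (hy : sin y ≠ 0) :
    cot x - cot y = sin (y - x) / (sin x * sin y) := by
  rw [cot_eq_cos_div_sin, cot_eq_cos_div_sin, div_sub_div _ _ hx hy, sin_sub]
  ring

theorem one_add_cot_sq {x : ℝ} (hx : sin x ≠ 0) : 1 + cot x ^ 2 = 1 / sin x ^ 2 := by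
  rw [cot_eq_cos_div_sin]
  field_simp
  linear_combination sin_sq_add_cos_sq x

theorem sin_add_eq_mul_one_add_cot_mul_tan {x y : ℝ} (hx : sin x ≠ 0) (hy : cos y ≠ 0) :
    sin (x + y) = sin x * cos y * (1 + cot x * tan y) := by
  rw [sin_add, cot_eq_cos_div_sin, tan_eq_sin_div_cos]
  field_simp

theorem cot_add_sub_cot {x y : ℝ} (hx : sin x ≠ 0) (hy : cos y ≠ 0)
    (h : 1 + cot x * tan y ≠ 0) :
    cot (x + y) - cot x = -(tan y * (1 + cot x ^ 2)) / (1 + cot x * tan y) := by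
  have hsum := sin_add_eq_mul_one_add_cot_mul_tan hx hy
  have hxy : sin (x + y) ≠ 0 := by rw [hsum]; exact mul_ne_zero (mul_ne_zero hx hy) h
  rw [cot_sub_cot hxy hx, sub_add_cancel_left, sin_neg, hsum, one_add_cot_sq hx, tan_eq_sin_div_cos]
  field_simp

end Real

theorem one_sub_le_abs_one_add_mul {a b ε Q : ℝ} (ha : |a| ≤ Q) (hb : |b| ≤ ε) :
    1 - ε * Q ≤ |1 + a * b| := by
  have hab : |a * b| ≤ ε * Q := by
    rw [abs_mul, mul_comm ε]
    exact mul_le_mul ha hb (abs_nonneg b) ((abs_nonneg a).trans ha)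
  have := abs_sub_abs_le_abs_sub 1 (-(a * b))
  rw [abs_one, abs_neg, sub_neg_eq_add] at this
  linarith

theorem abs_mul_one_add_sq_div_le {a b ε Q : ℝ} (ha : |a| ≤ Q) (hb : |b| ≤ ε) (hεQ : ε * Q < 1) :
    |b * (1 + a ^ 2) / (1 + a * b)| ≤ ε * (1 + Q ^ 2) / (1 - ε * Q) := by
  have hden := one_sub_le_abs_one_add_mul ha hb
  have ha2 : a ^ 2 ≤ Q ^ 2 := sq_le_sq' (abs_le.mp ha).1 (abs_le.mp ha).2
  have hε : 0 ≤ ε := (abs_nonneg b).trans hb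
  rw [abs_div, abs_mul, abs_of_pos (by positivity : (0 : ℝ) < 1 + a ^ 2)]
  exact div_le_div₀ (by positivity) (by gcongr) (sub_pos.mpr hεQ) hden

theorem stmt_8_general (I : Set ℝ) (ρ ρ' ψ ψh φ : ℝ → ℝ) (ε Q : ℝ)
    (hεQ : ε * Q < 1)
    (heq : ∀ θ ∈ I, ρ' θ = ρ θ *
      (Real.cos (ψh θ) / Real.sin (ψh θ) - Real.cos (ψ θ) / Real.sin (ψ θ)))
    (hψ : ∀ θ ∈ I, ψ θ = ψh θ - φ θ)
    (hsin : ∀ θ ∈ I, Real.sin (ψ θ) ≠ 0)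
    (hcos : ∀ θ ∈ I, Real.cos (φ θ) ≠ 0)
    (hρpos : ∀ θ ∈ I, 0 < ρ θ) (hρ1 : ∀ θ ∈ I, ρ θ ≤ 1)
    (htan : ∀ θ ∈ I, |Real.tan (φ θ)| ≤ ε)
    (hcot : ∀ θ ∈ I, |Real.cos (ψ θ) / Real.sin (ψ θ)| ≤ Q) :
    ∀ θ ∈ I, |ρ' θ| ≤ ε * (1 + Q^2) * Real.sqrt (1 + ε^2) / (1 - ε * Q) := by
  intro θ hθ
  have hk : |cot (ψ θ)| ≤ Q := by rw [cot_eq_cos_div_sin]; exact hcot θ hθ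
  have ht := htan θ hθ
  have hden : 1 + cot (ψ θ) * tan (φ θ) ≠ 0 :=
    abs_pos.mp ((sub_pos.mpr hεQ).trans_le (one_sub_le_abs_one_add_mul hk ht))
  have hψh : ψh θ = ψ θ + φ θ := by linarith [hψ θ hθ]
  have hbound : |ρ' θ| ≤ ε * (1 + Q ^ 2) / (1 - ε * Q) := by
    rw [heq θ hθ, ← cot_eq_cos_div_sin, ← cot_eq_cos_div_sin, hψh,
      cot_add_sub_cot (hsin θ hθ) (hcos θ hθ) hden, abs_mul, abs_of_pos (hρpos θ hθ), neg_div,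
      abs_neg]
    exact (mul_le_of_le_one_left (abs_nonneg _) (hρ1 θ hθ)).trans
      (abs_mul_one_add_sq_div_le hk ht hεQ)
  rw [mul_div_right_comm]
  exact hbound.trans (le_mul_of_one_le_right ((abs_nonneg _).trans hbound)
    (one_le_sqrt.mpr (le_add_of_nonneg_right (sq_nonneg ε))))

theorem stmt_8 (I : Set ℝ) (ρ ρ' ψ ψh φ : ℝ → ℝ) (ε Q : ℝ)
    (hε : 0 ≤ ε) (hQ : 0 ≤ Q) (hεQ : ε * Q < 1)
    (hderiv : ∀ θ ∈ I, HasDerivAt ρ (ρ' θ) θ)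
    (heq : ∀ θ ∈ I, ρ' θ = ρ θ *
      (Real.cos (ψh θ) / Real.sin (ψh θ) - Real.cos (ψ θ) / Real.sin (ψ θ)))
    (hψ : ∀ θ ∈ I, ψ θ = ψh θ - φ θ)
    (hsin : ∀ θ ∈ I, Real.sin (ψ θ) ≠ 0)
    (hsinh : ∀ θ ∈ I, Real.sin (ψh θ) ≠ 0)
    (hcos : ∀ θ ∈ I, Real.cos (φ θ) ≠ 0)
    (hρpos : ∀ θ ∈ I, 0 < ρ θ) (hρ1 : ∀ θ ∈ I, ρ θ ≤ 1)
    (htan : ∀ θ ∈ I, |Real.tan (φ θ)| ≤ ε)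
    (hcot : ∀ θ ∈ I, |Real.cos (ψ θ) / Real.sin (ψ θ)| ≤ Q) :
    ∀ θ ∈ I, |ρ' θ| ≤ ε * (1 + Q^2) * Real.sqrt (1 + ε^2) / (1 - ε * Q) :=
  stmt_8_general I ρ ρ' ψ ψh φ ε Q hεQ heq hψ hsin hcos hρpos hρ1 htan hcot
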